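/- Let H be a complex Hilbert space and let E₁, …, Eₙ be effects on H. For an effect E write E^(1) = E and E^(2) = 1 − E. For each multi-index (i₁, …, iₙ) ∈ {1,2}ⁿ define G_{i₁⋯iₙ} = (1/n!) Σ_π E^(i_{π(1)})_{π(1)} E^(i_{π(2)})_{π(2)} ⋯ E^(i_{π(n)})_{π(n)}, the sum running over all permutations π of {1, …, n}. Then for each k, summing G_{i₁⋯iₙ} over all multi-indices with i_k = 1 yields E_k, and summing over all multi-indices yields 1. Consequently, if every G_{i₁⋯iₙ} is a positive operator, then the effects E₁, …, Eₙ are coexistent, i.e., there exists a family (G_i)_{i ∈ {1,2}ⁿ} of effects summing to 1 whose marginals Σ_{i : i_k = 1} G_i equal E_k for every k. -/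
import Mathlib


theorem aux_sum_prod {A : Type*} [Semiring A] : ∀ (n : ℕ) (g : Fin n → Bool → A),
    ∑ j : Fin n → Bool, (List.ofFn fun k => g k (j k)).prod
      = (List.ofFn fun k => g k true + g k false).prod := by
  intro n
  induction n with
  | zero => intro g; simp
  | succ n ih =>
    intro g
    rw [← Equiv.sum_comp (Fin.consEquiv fun _ : Fin (n+1) => Bool)
      (fun j => (List.ofFn fun k => g k (j k)).prod)]
    rw [Fintype.sum_prod_type]
    have h : ∀ (b : Bool) (j : Fin n → Bool),
        (List.ofFn fun k => g k ((Fin.consEquiv fun _ : Fin (n+1) => Bool) (b, j) k)).prod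
          = g 0 b * (List.ofFn fun k => g k.succ (j k)).prod := by
      intro b j
      rw [List.ofFn_succ]
      simp [Fin.consEquiv]
    simp only [h, ← Finset.mul_sum, ← Finset.sum_mul]
    rw [ih (fun k => g k.succ), List.ofFn_succ]
    simp [Fintype.sum_bool]

theorem aux_prod_ite {M : Type*} [Monoid M] : ∀ (n : ℕ) (m : Fin n) (a : M),
    (List.ofFn fun k => if k = m then a else 1).prod = a := by
  intro n
  induction n with
  | zero => exact fun m => m.elim0
  | succ n ih =>
    intro m a
    refine Fin.cases ?_ ?_ m
    · rw [List.ofFn_succ]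
      simp [Fin.succ_ne_zero]
    · intro j
      rw [List.ofFn_succ]
      simp only [Fin.succ_inj]
      simp [Fin.succ_ne_zero, (Fin.succ_ne_zero j).symm, ih j a]

variable {H : Type*} [NormedAddCommGroup H] [InnerProductSpace ℂ H] [CompleteSpace H]

/-- An effect on a complex Hilbert space: an operator `E` with `0 ≤ E ≤ 1` in the Loewner order. -/
def IsEffect (E : H →L[ℂ] H) : Prop := 0 ≤ E ∧ E ≤ 1

/-- Two effects `E` and `F` are coexistent if there are four effects `G₁₁, G₁₂, G₂₁, G₂₂` with
`G₁₁ + G₁₂ = E`, `G₁₁ + G₂₁ = F` and `G₁₁ + G₁₂ + G₂₁ + G₂₂ = 1`. -/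
def Coexistent (E F : H →L[ℂ] H) : Prop :=
  ∃ G₁₁ G₁₂ G₂₁ G₂₂ : H →L[ℂ] H,
    IsEffect G₁₁ ∧ IsEffect G₁₂ ∧ IsEffect G₂₁ ∧ IsEffect G₂₂ ∧
    G₁₁ + G₁₂ = E ∧ G₁₁ + G₂₁ = F ∧ G₁₁ + G₁₂ + G₂₁ + G₂₂ = 1
/-- `E^(1) = E` (for `true`) and `E^(2) = 1 - E` (for `false`). -/
noncomputable def sel (b : Bool) (E : H →L[ℂ] H) : H →L[ℂ] H := if b then E else 1 - E

/-- The symmetrized products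
`G_{i₁⋯iₙ} = (1/n!) Σ_π E^(i_{π(1)})_{π(1)} ⋯ E^(i_{π(n)})_{π(n)}`. -/
noncomputable def symProd {n : ℕ} (E : Fin n → H →L[ℂ] H) (i : Fin n → Bool) : H →L[ℂ] H :=
  (Nat.factorial n : ℂ)⁻¹ •
    ∑ π : Equiv.Perm (Fin n), (List.ofFn fun k : Fin n => sel (i (π k)) (E (π k))).prod


omit [CompleteSpace H] in
theorem sel_add (E : H →L[ℂ] H) : sel true E + sel false E = 1 := by
  simp [sel]

theorem full_sum_perm {n : ℕ} (E : Fin n → H →L[ℂ] H) (π : Equiv.Perm (Fin n)) :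
    ∑ i : Fin n → Bool, (List.ofFn fun k : Fin n => sel (i (π k)) (E (π k))).prod = 1 := by
  rw [← Equiv.sum_comp (π.arrowCongr (Equiv.refl Bool))
    (fun i => (List.ofFn fun k : Fin n => sel (i (π k)) (E (π k))).prod)]
  simp only [Equiv.arrowCongr_apply, Function.comp, Equiv.refl_apply, Equiv.symm_apply_apply]
  rw [aux_sum_prod n (fun k b => sel b (E (π k)))]
  simp [sel_add]

theorem filt_sum_perm {n : ℕ} (E : Fin n → H →L[ℂ] H) (π : Equiv.Perm (Fin n)) (k₀ : Fin n) :
    ∑ i ∈ Finset.univ.filter (fun i : Fin n → Bool => i k₀ = true),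
      (List.ofFn fun k : Fin n => sel (i (π k)) (E (π k))).prod = E k₀ := by
  set m₀ : Fin n := π.symm k₀ with hm₀
  set g' : Fin n → Bool → (H →L[ℂ] H) := fun k b =>
    if k = m₀ then (if b then sel true (E (π k)) else 0) else sel b (E (π k)) with hg'
  rw [Finset.sum_filter]
  rw [← Equiv.sum_comp (π.arrowCongr (Equiv.refl Bool))
    (fun i => if i k₀ = true then (List.ofFn fun k : Fin n => sel (i (π k)) (E (π k))).prod else 0)]
  simp only [Equiv.arrowCongr_apply, Function.comp, Equiv.refl_apply, Equiv.symm_apply_apply]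
  have key : ∀ j : Fin n → Bool,
      (if j m₀ = true then (List.ofFn fun k : Fin n => sel (j k) (E (π k))).prod else 0)
        = (List.ofFn fun k => g' k (j k)).prod := by
    intro j
    by_cases hj : j m₀ = true
    · rw [if_pos hj]
      have hfe : (fun k => sel (j k) (E (π k))) = fun k => g' k (j k) := by
        funext k
        by_cases hk : k = m₀
        · subst hk; simp [hg', hj]
        · simp [hg', hk]
      rw [hfe]
    · rw [if_neg hj]
      rw [Bool.not_eq_true] at hj
      have h0 : (0 : H →L[ℂ] H) ∈ List.ofFn fun k => g' k (j k) := by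
        rw [List.mem_ofFn]
        exact ⟨m₀, by simp [hg', hj]⟩
      exact (List.prod_eq_zero h0).symm
  simp only [key]
  rw [aux_sum_prod n g']
  have hsum : ∀ k : Fin n, g' k true + g' k false = if k = m₀ then E k₀ else 1 := by
    intro k
    by_cases hk : k = m₀
    · subst hk
      simp [hg', sel, hm₀]
    · simp [hg', hk, sel_add]
  simp only [hsum]
  exact aux_prod_ite n m₀ (E k₀)

/-- Marginals of the symmetrized products recover the effects, they sum to one, and if all of
them are positive then the effects E₁, …, Eₙ are coexistent. -/
theorem coexistent_of_symProd_nonneg {n : ℕ} (E : Fin n → H →L[ℂ] H)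
    (hE : ∀ k, IsEffect (E k)) :
    (∀ k : Fin n,
      ∑ i ∈ Finset.univ.filter (fun i : Fin n → Bool => i k = true), symProd E i = E k) ∧
    (∑ i : Fin n → Bool, symProd E i = 1) ∧
    ((∀ i : Fin n → Bool, 0 ≤ symProd E i) →
      ∃ G : (Fin n → Bool) → H →L[ℂ] H,
        (∀ i, IsEffect (G i)) ∧ (∑ i, G i = 1) ∧
        ∀ k : Fin n,
          ∑ i ∈ Finset.univ.filter (fun i : Fin n → Bool => i k = true), G i = E k) := by
  have hmarg : ∀ k : Fin n,
      ∑ i ∈ Finset.univ.filter (fun i : Fin n → Bool => i k = true), symProd E i = E k := by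
    intro k
    simp only [symProd]
    rw [← Finset.smul_sum, Finset.sum_comm]
    simp only [fun π => filt_sum_perm E π k]
    rw [Finset.sum_const, Finset.card_univ, Fintype.card_perm, Fintype.card_fin,
      ← Nat.cast_smul_eq_nsmul ℂ, smul_smul, inv_mul_cancel₀, one_smul]
    exact_mod_cast (Nat.factorial_pos n).ne'
  have hone : ∑ i : Fin n → Bool, symProd E i = 1 := by
    simp only [symProd]
    rw [← Finset.smul_sum, Finset.sum_comm]
    simp only [fun π => full_sum_perm E π]
    rw [Finset.sum_const, Finset.card_univ, Fintype.card_perm, Fintype.card_fin,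
      ← Nat.cast_smul_eq_nsmul ℂ, smul_smul, inv_mul_cancel₀, one_smul]
    exact_mod_cast (Nat.factorial_pos n).ne'
  refine ⟨hmarg, hone, fun hpos => ⟨symProd E, fun i => ⟨hpos i, ?_⟩, hone, hmarg⟩⟩
  calc symProd E i ≤ ∑ j : Fin n → Bool, symProd E j :=
        Finset.single_le_sum (fun j _ => hpos j) (Finset.mem_univ i)
    _ = 1 := hone
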